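/- arXiv:1010.0327 — 2 statements merged into one kernel-verified Lean document; each statement's English description precedes it below -/
import Mathlib

section
/- Let M₁, M₂ be countable elementary submodels of H_{ω₂} satisfying the compatibility condition (each intersection is an initial segment or an element of the other, and the fence sets are finite). If there exist λ₁ ∈ M₁ \ M₂ and λ₂ ∈ M₂ \ M₁ with λ₁, λ₂ < sup(M₁ ∩ M₂ ∩ Ord), then a contradiction follows; hence below sup(M₁ ∩ M₂ ∩ Ord) one of M₁ ∩ Ord, M₂ ∩ Ord is contained in the other. -/
open FirstOrder

/-- The language with a single binary relation symbol (membership). -/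
inductive memRel : ℕ → Type
  | mem : memRel 2

/-- The language of set theory: one binary relation `∈`. -/
def memLang : Language := ⟨fun _ => Empty, memRel⟩

/-- `H κ` is the collection of sets of hereditary cardinality `< κ`. -/
def HSet (κ : Cardinal.{0}) : Set ZFSet.{0} :=
  {x | ZFSet.Hereditarily (fun y => Cardinal.mk y.toSet < Cardinal.lift.{1} κ) x}

/-- `H κ` as a structure in the language of set theory. -/
noncomputable instance HSetStructure (κ : Cardinal.{0}) : memLang.Structure (HSet κ) where
  funMap {_n} f := Empty.elim f
  RelMap {_n} r := memRel.rec (motive := fun n _ => (Fin n → HSet κ) → Prop)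
    (fun v => (v 0).1 ∈ (v 1).1) r

/-- The set of ordinals of a submodel `M`, identified via von Neumann rank. -/
def ordTrace {κ : Cardinal.{0}} (M : Set (HSet κ)) : Set Ordinal.{0} :=
  {o | ∃ x : HSet κ, x ∈ M ∧ x.1.IsOrdinal ∧ x.1.rank = o}

/-- The `T₁`-fence for `T₂` (for sets of ordinals `T₁, T₂` with common supremum `δ`):
the finite set of minimal elements of `T₁` above points of `T₂` past `δ`. -/
noncomputable def fence (T₁ T₂ : Set Ordinal) (δ : Ordinal) : Set Ordinal :=
  {o | ∃ l ∈ T₂, δ < l ∧ l < sSup T₁ ∧ o = sInf (T₁ ∩ Set.Ici l)} ∪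
    {sInf (T₁ ∩ Set.Ici δ)}

/-!
If `δ` belonged to both ordinal traces, so would `δ + 1`, since `δ + 1 = δ ∪ {δ}` is definable from
`δ` in each model; this contradicts `δ = sup (T₁ ∩ T₂)`, as `T₁ ∩ T₂` is countable, hence bounded.
So `δ ∉ Tᵢ` for some `i`, and the second half of clause (a) moves every countable set of ordinals
below `δ` from `Mᵢ` to the other model. An infinite ordinal `o ∈ Mᵢ` below `δ` is recovered as the
union of such a set, `A = {o} ∪ ω`, which is definable in `Mᵢ` from `o` and `ω`; finite ordinals
lie in every elementary submodel.
-/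

open Cardinal Ordinal

section HSet

variable {κ : Cardinal.{0}}

theorem mem_hSet_iff {x : ZFSet} : x ∈ HSet κ ↔ x.card < κ ∧ ∀ y ∈ x, y ∈ HSet κ := by
  change ZFSet.Hereditarily _ x ↔ _
  rw [ZFSet.hereditarily_iff]
  change #x < _ ∧ _ ↔ _
  rw [ZFSet.cardinalMk_coe_sort, Cardinal.lift_lt]
  rfl

theorem toZFSet_mem_hSet {o : Ordinal.{0}} (ho : o.card < κ) : o.toZFSet ∈ HSet κ := by
  induction o using WellFoundedLT.induction with
  | _ o ih =>
    refine mem_hSet_iff.2 ⟨by rwa [card_toZFSet], fun y hy => ?_⟩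
    obtain ⟨a, ha, rfl⟩ := mem_toZFSet_iff.1 hy
    exact ih a ha ((card_le_card ha.le).trans_lt ho)

theorem natCast_toZFSet_mem_hSet (hκ : ℵ₀ ≤ κ) (n : ℕ) : (n : Ordinal).toZFSet ∈ HSet κ :=
  toZFSet_mem_hSet (by simpa using natCast_lt_aleph0 (n := n) |>.trans_le hκ)

theorem toZFSet_omega0_mem_hSet (hκ : ℵ₀ < κ) : omega0.toZFSet ∈ HSet κ :=
  toZFSet_mem_hSet (by rwa [card_omega0])

theorem insert_mem_hSet (hκ : ℵ₀ ≤ κ) {x y : ZFSet} (hx : x ∈ HSet κ) (hy : y ∈ HSet κ) :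
    insert x y ∈ HSet κ := by
  rw [mem_hSet_iff] at hy ⊢
  refine ⟨?_, fun z hz => ?_⟩
  · exact ZFSet.card_insert_le.trans_lt (add_lt_of_lt hκ hy.1 (one_lt_aleph0.trans_le hκ))
  · rcases ZFSet.mem_insert_iff.1 hz with rfl | hz
    exacts [hx, hy.2 z hz]

theorem eq_of_forall_mem_hSet_iff {x y : ZFSet} (hx : x ∈ HSet κ) (hy : y ∈ HSet κ)
    (h : ∀ z ∈ HSet κ, z ∈ x ↔ z ∈ y) : x = y :=
  ZFSet.ext fun z => ⟨fun hz => (h z (hx.mem hz)).1 hz, fun hz => (h z (hy.mem hz)).2 hz⟩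

end HSet

theorem mem_toZFSet_omega0_iff {z : ZFSet} :
    z ∈ omega0.toZFSet ↔ ∃ n : ℕ, (n : Ordinal).toZFSet = z := by
  simp only [mem_toZFSet_iff, lt_omega0]
  constructor
  · rintro ⟨_, ⟨n, rfl⟩, rfl⟩
    exact ⟨n, rfl⟩
  · rintro ⟨n, rfl⟩
    exact ⟨n, ⟨n, rfl⟩, rfl⟩

theorem card_insert_toZFSet_omega0 (x : ZFSet.{0}) : (insert x omega0.toZFSet).card = ℵ₀ := by
  refine le_antisymm ?_ ?_
  · calc (insert x omega0.toZFSet).card ≤ omega0.toZFSet.card + 1 := ZFSet.card_insert_le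
      _ = ℵ₀ := by rw [card_toZFSet, card_omega0, add_one_eq le_rfl]
  · calc ℵ₀ = omega0.toZFSet.card := by rw [card_toZFSet, card_omega0]
      _ ≤ (insert x omega0.toZFSet).card := ZFSet.card_mono fun _ => ZFSet.mem_insert_of_mem _

theorem sUnion_insert_toZFSet {a b : Ordinal} (h : b ≤ a) :
    ZFSet.sUnion (insert a.toZFSet b.toZFSet) = a.toZFSet := by
  ext z
  rw [ZFSet.mem_sUnion]
  refine ⟨?_, fun hz => ⟨_, ZFSet.mem_insert _ _, hz⟩⟩
  rintro ⟨y, hy, hzy⟩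
  rcases ZFSet.mem_insert_iff.1 hy with rfl | hy
  · exact hzy
  · exact (ZFSet.isOrdinal_toZFSet a).mem_trans hzy (toZFSet_monotone h hy)

section Omega

/-- The relativisation to `HSet κ` of "`t` contains `∅` and is closed under `y ↦ y ∪ {y}`". -/
def IsInductiveIn (κ : Cardinal.{0}) (t : ZFSet) : Prop :=
  (∃ e ∈ t, e ∈ HSet κ ∧ ∀ a ∈ HSet κ, a ∉ e) ∧
    ∀ y ∈ HSet κ, y ∈ t → ∃ u ∈ t, u ∈ HSet κ ∧ ∀ a ∈ HSet κ, a ∈ u ↔ a ∈ y ∨ a = y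

variable {κ : Cardinal.{0}}

theorem isInductiveIn_toZFSet_omega0 (hκ : ℵ₀ ≤ κ) : IsInductiveIn κ omega0.toZFSet := by
  refine ⟨⟨_, mem_toZFSet_omega0_iff.2 ⟨0, rfl⟩, natCast_toZFSet_mem_hSet hκ 0, fun a _ => ?_⟩,
    fun y _ hy => ?_⟩
  · simp [ZFSet.notMem_empty]
  · obtain ⟨n, rfl⟩ := mem_toZFSet_omega0_iff.1 hy
    refine ⟨_, mem_toZFSet_omega0_iff.2 ⟨n + 1, rfl⟩, natCast_toZFSet_mem_hSet hκ (n + 1),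
      fun a _ => ?_⟩
    rw [Nat.cast_succ, toZFSet_add_one, ZFSet.mem_insert_iff, or_comm]

theorem IsInductiveIn.natCast_toZFSet_mem (hκ : ℵ₀ ≤ κ) {t : ZFSet} (ht : t ∈ HSet κ)
    (hind : IsInductiveIn κ t) (n : ℕ) : (n : Ordinal).toZFSet ∈ t := by
  obtain ⟨⟨e, het, heH, he⟩, hsucc⟩ := hind
  induction n with
  | zero =>
    convert het
    refine eq_of_forall_mem_hSet_iff (natCast_toZFSet_mem_hSet hκ 0) heH fun a ha => ?_
    simp [he a ha]
  | succ n ih =>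
    obtain ⟨u, hut, huH, hu⟩ := hsucc _ (ht.mem ih) ih
    convert hut
    refine eq_of_forall_mem_hSet_iff (natCast_toZFSet_mem_hSet hκ (n + 1)) huH fun a ha => ?_
    rw [hu a ha, Nat.cast_succ, toZFSet_add_one, ZFSet.mem_insert_iff, or_comm]

theorem mem_toZFSet_omega0_iff_forall_isInductiveIn (hκ : ℵ₀ < κ) {z : ZFSet} :
    z ∈ omega0.toZFSet ↔ ∀ t ∈ HSet κ, IsInductiveIn κ t → z ∈ t := by
  refine ⟨fun hz t ht hind => ?_, fun h => h _ ?_ (isInductiveIn_toZFSet_omega0 hκ.le)⟩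
  · obtain ⟨n, rfl⟩ := mem_toZFSet_omega0_iff.1 hz
    exact hind.natCast_toZFSet_mem hκ.le ht n
  · exact toZFSet_omega0_mem_hSet hκ

end Omega

namespace FirstOrder.Language.ElementarySubstructure

variable {L : Language} {M : Type*} [L.Structure M] {α : Type*}

theorem mem_of_realize_iff_eq (S : L.ElementarySubstructure M) (φ : L.BoundedFormula α 1)
    (v : α → S) {w : M} (hφ : ∀ w', φ.Realize (Subtype.val ∘ v) (fun _ => w') ↔ w' = w) :
    w ∈ S := by
  have hex : φ.ex.Realize (S.subtype ∘ v) (S.subtype ∘ default) := by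
    rw [BoundedFormula.realize_ex]
    exact ⟨w, (hφ w).2 rfl⟩
  obtain ⟨a, ha⟩ := BoundedFormula.realize_ex.1 ((S.subtype.map_boundedFormula _ _ _).1 hex)
  exact (hφ a).1 ((S.subtype.map_boundedFormula φ v _).2 ha) ▸ a.2

end FirstOrder.Language.ElementarySubstructure

namespace memLang

open FirstOrder Language

variable {α : Type} {n : ℕ} {κ : Cardinal.{0}}

def mem (t u : memLang.Term (α ⊕ Fin n)) : memLang.BoundedFormula α n :=
  Relations.boundedFormula₂ memRel.mem t u

@[simp]
theorem realize_mem (t u : memLang.Term (α ⊕ Fin n)) (v : α → HSet κ) (xs : Fin n → HSet κ) :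
    (mem t u).Realize v xs ↔ (t.realize (Sum.elim v xs)).1 ∈ (u.realize (Sum.elim v xs)).1 :=
  Iff.rfl

def comprehension (ψ : memLang.BoundedFormula α 2) : memLang.BoundedFormula α 1 :=
  ∀' (mem (&1) (&0) ⇔ ψ)

variable (S : memLang.ElementarySubstructure (HSet κ))

theorem mem_of_comprehension (ψ : memLang.BoundedFormula α 2) (v : α → S) (P : ZFSet → Prop)
    (hψ : ∀ xs : Fin 2 → HSet κ, ψ.Realize (Subtype.val ∘ v) xs ↔ P (xs 1)) {w : ZFSet}
    (hwH : w ∈ HSet κ) (hw : ∀ z ∈ HSet κ, z ∈ w ↔ P z) : ⟨w, hwH⟩ ∈ S := by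
  refine S.mem_of_realize_iff_eq (comprehension ψ) v fun s => ?_
  have hψ' : ∀ z : HSet κ, ψ.Realize (Subtype.val ∘ v) (Fin.snoc (fun _ => s) z) ↔ P z :=
    fun z => hψ _
  simp only [comprehension, BoundedFormula.realize_all, BoundedFormula.realize_iff]
  change (∀ z : HSet κ, z.1 ∈ s.1 ↔ ψ.Realize _ (Fin.snoc (fun _ => s) z)) ↔ _
  simp only [hψ']
  refine ⟨fun hs => Subtype.ext ?_, fun hs z => hs ▸ hw z z.2⟩
  exact eq_of_forall_mem_hSet_iff s.2 hwH fun z hz => (hs ⟨z, hz⟩).trans (hw z hz).symm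

theorem insert_mem (hκ : ℵ₀ ≤ κ) {x y : HSet κ} (hx : x ∈ S) (hy : y ∈ S) :
    ⟨insert x.1 y.1, insert_mem_hSet hκ x.2 y.2⟩ ∈ S :=
  mem_of_comprehension S (mem (&1) (Term.var (Sum.inl 1)) ⊔ (&1 =' Term.var (Sum.inl 0)))
    ![⟨x, hx⟩, ⟨y, hy⟩] (fun z => z ∈ y.1 ∨ z = x.1)
    (fun xs => by simp [Subtype.ext_iff]) _ fun z _ => by rw [ZFSet.mem_insert_iff, or_comm]

theorem sUnion_mem {x : HSet κ} (hx : x ∈ S) (h : ZFSet.sUnion x.1 ∈ HSet κ) :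
    ⟨ZFSet.sUnion x.1, h⟩ ∈ S :=
  mem_of_comprehension S (∃' (mem (&2) (Term.var (Sum.inl 0)) ⊓ mem (&1) (&2)))
    ![⟨x, hx⟩] (fun z => ∃ y ∈ x.1, z ∈ y)
    (fun xs => by
      simp only [BoundedFormula.realize_ex, BoundedFormula.realize_inf, realize_mem]
      exact ⟨fun ⟨y, h⟩ => ⟨y.1, h⟩, fun ⟨y, h⟩ => ⟨⟨y, x.2.mem h.1⟩, h⟩⟩)
    _ fun z _ => ZFSet.mem_sUnion

theorem natCast_toZFSet_mem (hκ : ℵ₀ ≤ κ) (n : ℕ) :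
    ⟨(n : Ordinal).toZFSet, natCast_toZFSet_mem_hSet hκ n⟩ ∈ S := by
  induction n with
  | zero =>
    exact mem_of_comprehension S ⊥ Empty.elim (fun _ => False) (fun _ => Iff.rfl) _ fun _ _ => by
      simp
  | succ n ih =>
    convert insert_mem S hκ ih ih using 2
    rw [Nat.cast_succ, toZFSet_add_one]

theorem toZFSet_omega0_mem (hκ : ℵ₀ < κ) :
    ⟨omega0.toZFSet, toZFSet_omega0_mem_hSet hκ⟩ ∈ S :=
  mem_of_comprehension S (∀' (((∃' (mem (&3) (&2) ⊓ ∀' ∼(mem (&4) (&3)))) ⊓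
      ∀' (mem (&3) (&2) ⟹
        ∃' (mem (&4) (&2) ⊓ ∀' (mem (&5) (&4) ⇔ (mem (&5) (&3) ⊔ &5 =' &3))))) ⟹ mem (&1) (&2)))
    Empty.elim (fun z => ∀ t ∈ HSet κ, IsInductiveIn κ t → z ∈ t)
    (fun xs => by simp [IsInductiveIn, Fin.snoc]) _
    fun _ _ => mem_toZFSet_omega0_iff_forall_isInductiveIn hκ

end memLang

section OrdTrace

variable {κ : Cardinal.{0}}

theorem mem_ordTrace_iff {M : Set (HSet κ)} {o : Ordinal} :
    o ∈ ordTrace M ↔ ∃ x ∈ M, x.1 = o.toZFSet := by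
  refine ⟨fun ⟨x, hx, hord, hrank⟩ => ⟨x, hx, hrank ▸ hord.toZFSet_rank_eq.symm⟩, ?_⟩
  rintro ⟨x, hx, hxo⟩
  exact ⟨x, hx, hxo ▸ ZFSet.isOrdinal_toZFSet o, hxo ▸ rank_toZFSet o⟩

theorem Set.Countable.ordTrace {M : Set (HSet κ)} (hM : M.Countable) : (ordTrace M).Countable :=
  (hM.image fun x => x.1.rank).mono <| by
    rintro _ ⟨x, hx, -, rfl⟩
    exact ⟨x, hx, rfl⟩

variable (S : memLang.ElementarySubstructure (HSet κ))

theorem natCast_mem_ordTrace (hκ : ℵ₀ ≤ κ) (n : ℕ) :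
    (n : Ordinal) ∈ ordTrace (S : Set (HSet κ)) :=
  mem_ordTrace_iff.2 ⟨_, memLang.natCast_toZFSet_mem S hκ n, rfl⟩

theorem add_one_mem_ordTrace (hκ : ℵ₀ ≤ κ) {o : Ordinal} (ho : o ∈ ordTrace (S : Set (HSet κ))) :
    o + 1 ∈ ordTrace (S : Set (HSet κ)) := by
  obtain ⟨x, hx, hxo⟩ := mem_ordTrace_iff.1 ho
  exact mem_ordTrace_iff.2 ⟨_, memLang.insert_mem S hκ hx hx, by rw [toZFSet_add_one, ← hxo]⟩

theorem sSup_inter_ordTrace_notMem (S' : memLang.ElementarySubstructure (HSet κ)) (hκ : ℵ₀ ≤ κ)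
    (hS : (S : Set (HSet κ)).Countable) :
    sSup (ordTrace (S : Set (HSet κ)) ∩ ordTrace (S' : Set (HSet κ))) ∉
      ordTrace (S : Set (HSet κ)) ∩ ordTrace (S' : Set (HSet κ)) := by
  set T := ordTrace (S : Set (HSet κ)) ∩ ordTrace (S' : Set (HSet κ))
  intro h
  have : Countable T := (hS.ordTrace.mono Set.inter_subset_left).to_subtype
  have hsucc : sSup T + 1 ∈ T := ⟨add_one_mem_ordTrace S hκ h.1, add_one_mem_ordTrace S' hκ h.2⟩
  exact (lt_add_one _).not_ge (le_csSup Ordinal.bddAbove_of_small hsucc)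

end OrdTrace

theorem ordTrace_inter_Iio_subset {κ : Cardinal.{0}} (hκ : ℵ₀ < κ)
    {M₁ M₂ : memLang.ElementarySubstructure (HSet κ)} {δ : Ordinal}
    (h : ∀ A : HSet κ, A ∈ M₁ → #A.1.toSet = ℵ₀ →
      (∀ y ∈ A.1, y.IsOrdinal ∧ y.rank < δ) → A ∈ M₂) :
    ordTrace (M₁ : Set (HSet κ)) ∩ Set.Iio δ ⊆ ordTrace (M₂ : Set (HSet κ)) := by
  rintro o ⟨ho, hoδ⟩
  rcases lt_or_ge o ω with hfin | hinf
  · obtain ⟨n, rfl⟩ := lt_omega0.1 hfin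
    exact natCast_mem_ordTrace M₂ hκ.le n
  obtain ⟨x, hx, hxo⟩ := mem_ordTrace_iff.1 ho
  set A : HSet κ :=
    ⟨insert x.1 omega0.toZFSet, insert_mem_hSet hκ.le x.2 (toZFSet_omega0_mem_hSet hκ)⟩
  have hA₁ : A ∈ M₁ := memLang.insert_mem M₁ hκ.le hx (memLang.toZFSet_omega0_mem M₁ hκ)
  have hA_card : #A.1.toSet = ℵ₀ := by
    change #A.1 = ℵ₀
    rw [ZFSet.cardinalMk_coe_sort, card_insert_toZFSet_omega0, lift_aleph0]
  have hA_ord : ∀ y ∈ A.1, y.IsOrdinal ∧ y.rank < δ := by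
    intro y hy
    rcases ZFSet.mem_insert_iff.1 hy with rfl | hy
    · rw [hxo]
      exact ⟨ZFSet.isOrdinal_toZFSet o, (rank_toZFSet o).trans_lt hoδ⟩
    · obtain ⟨a, ha, rfl⟩ := mem_toZFSet_iff.1 hy
      exact ⟨ZFSet.isOrdinal_toZFSet a,
        (rank_toZFSet a).trans_lt (ha.trans_le (hinf.trans hoδ.le))⟩
  have hA_sUnion : ZFSet.sUnion A.1 = o.toZFSet := by
    rw [← sUnion_insert_toZFSet hinf, ← hxo]
  exact mem_ordTrace_iff.2 ⟨_,
    memLang.sUnion_mem M₂ (h A hA₁ hA_card hA_ord) (hA_sUnion ▸ hxo ▸ x.2), hA_sUnion⟩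

theorem compatible_models_comparable_below_sup_general
    (M₁ M₂ : memLang.ElementarySubstructure (HSet (Cardinal.aleph 2)))
    (hM₁ : (M₁ : Set (HSet (Cardinal.aleph 2))).Countable)
    (T₁ T₂ : Set Ordinal)
    (hT₁ : T₁ = ordTrace (M₁ : Set (HSet (Cardinal.aleph 2))))
    (hT₂ : T₂ = ordTrace (M₂ : Set (HSet (Cardinal.aleph 2))))
    (δ : Ordinal) (hδ : δ = sSup (T₁ ∩ T₂))
    -- compatibility clause (a), for M₁ with respect to M₂ and symmetrically:
    (ha₁ : (δ ∈ T₁ → ∃ z : HSet (Cardinal.aleph 2), z ∈ M₁ ∧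
        ∀ y : ZFSet, y ∈ z.1 ↔ y.IsOrdinal ∧ y.rank ∈ T₁ ∩ T₂) ∧
      (δ ∉ T₁ → ∀ A : HSet (Cardinal.aleph 2), A ∈ M₁ →
        Cardinal.mk A.1.toSet = Cardinal.aleph0 →
        (∀ y ∈ A.1, y.IsOrdinal ∧ y.rank < δ) → A ∈ M₂))
    (ha₂ : (δ ∈ T₂ → ∃ z : HSet (Cardinal.aleph 2), z ∈ M₂ ∧
        ∀ y : ZFSet, y ∈ z.1 ↔ y.IsOrdinal ∧ y.rank ∈ T₁ ∩ T₂) ∧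
      (δ ∉ T₂ → ∀ A : HSet (Cardinal.aleph 2), A ∈ M₂ →
        Cardinal.mk A.1.toSet = Cardinal.aleph0 →
        (∀ y ∈ A.1, y.IsOrdinal ∧ y.rank < δ) → A ∈ M₁)) :
    T₁ ∩ Set.Iio δ ⊆ T₂ ∨ T₂ ∩ Set.Iio δ ⊆ T₁ := by
  have hκ : ℵ₀ < Cardinal.aleph 2 := aleph0_lt_aleph.2 (by norm_num)
  subst hT₁ hT₂
  have hδ_notMem := sSup_inter_ordTrace_notMem M₁ M₂ hκ.le hM₁
  rw [← hδ, Set.mem_inter_iff, not_and_or] at hδ_notMem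
  rcases hδ_notMem with h₁ | h₂
  · exact Or.inl (ordTrace_inter_Iio_subset hκ (ha₁.2 h₁))
  · exact Or.inr (ordTrace_inter_Iio_subset hκ (ha₂.2 h₂))

/-- If `M₁, M₂ ≺ H_{ω₂}` are countable and compatible (each intersection is
an initial segment or an element of the other, with finite fences), then below
`δ = sup(M₁ ∩ M₂ ∩ Ord)` one of the ordinal traces is contained in the other. -/
theorem compatible_models_comparable_below_sup
    (M₁ M₂ : memLang.ElementarySubstructure (HSet (Cardinal.aleph 2)))
    (hM₁ : (M₁ : Set (HSet (Cardinal.aleph 2))).Countable)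
    (hM₂ : (M₂ : Set (HSet (Cardinal.aleph 2))).Countable)
    (T₁ T₂ : Set Ordinal)
    (hT₁ : T₁ = ordTrace (M₁ : Set (HSet (Cardinal.aleph 2))))
    (hT₂ : T₂ = ordTrace (M₂ : Set (HSet (Cardinal.aleph 2))))
    (δ : Ordinal) (hδ : δ = sSup (T₁ ∩ T₂))
    -- compatibility clause (a), for M₁ with respect to M₂ and symmetrically:
    (ha₁ : (δ ∈ T₁ → ∃ z : HSet (Cardinal.aleph 2), z ∈ M₁ ∧
        ∀ y : ZFSet, y ∈ z.1 ↔ y.IsOrdinal ∧ y.rank ∈ T₁ ∩ T₂) ∧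
      (δ ∉ T₁ → ∀ A : HSet (Cardinal.aleph 2), A ∈ M₁ →
        Cardinal.mk A.1.toSet = Cardinal.aleph0 →
        (∀ y ∈ A.1, y.IsOrdinal ∧ y.rank < δ) → A ∈ M₂))
    (ha₂ : (δ ∈ T₂ → ∃ z : HSet (Cardinal.aleph 2), z ∈ M₂ ∧
        ∀ y : ZFSet, y ∈ z.1 ↔ y.IsOrdinal ∧ y.rank ∈ T₁ ∩ T₂) ∧
      (δ ∉ T₂ → ∀ A : HSet (Cardinal.aleph 2), A ∈ M₂ →
        Cardinal.mk A.1.toSet = Cardinal.aleph0 →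
        (∀ y ∈ A.1, y.IsOrdinal ∧ y.rank < δ) → A ∈ M₁))
    -- compatibility clause (b): both fences are finite:
    (hb₁ : (fence T₁ T₂ δ).Finite) (hb₂ : (fence T₂ T₁ δ).Finite) :
    T₁ ∩ Set.Iio δ ⊆ T₂ ∨ T₂ ∩ Set.Iio δ ⊆ T₁ :=
  compatible_models_comparable_below_sup_general M₁ M₂ hM₁ T₁ T₂ hT₁ hT₂ δ hδ ha₁ ha₂
end

section
/- Let κ be a regular cardinal > ω. Suppose 𝒞 ⊆ Lim(κ⁺) is a club in κ⁺ consisting of limit ordinals, and ⟨C_α : α ∈ 𝒞⟩ satisfies: (i) each C_α is a club in α of order type ≤ κ; (ii) if α, β ∈ 𝒞 and α is a limit point of C_β then α ∈ 𝒞 and C_α = C_β ∩ α; (iii) if cf(α) < κ then |C_α| < κ. Then there exists a full square sequence ⟨E_i : i ∈ Lim(κ⁺)⟩ on κ⁺, i.e., each E_i is a club in i of order type ≤ κ, E_j = E_i ∩ j whenever j is a limit point of E_i, and |E_i| < κ whenever cf(i) < κ. -/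
/-- `s` is a club (closed unbounded set) in the ordinal `a`. -/
def IsClubIn (s : Set Ordinal) (a : Ordinal) : Prop :=
  (∀ b ∈ s, b < a) ∧ (∀ b < a, ∃ c ∈ s, b < c) ∧
    (∀ b, b < a → 0 < b → b = sSup (s ∩ Set.Iio b) → b ∈ s)

/-- `b` is a limit point of the set of ordinals `s`. -/
def IsLimitPt (s : Set Ordinal) (b : Ordinal) : Prop :=
  0 < b ∧ b = sSup (s ∩ Set.Iio b)

/-- The order type of a set of ordinals. -/
noncomputable def otp (s : Set Ordinal.{0}) : Ordinal.{1} :=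
  Ordinal.type ((· < ·) : s → s → Prop)

/-!
Let `γ` be the increasing continuous enumeration of the limit points of `𝒞`; it maps ordinals
below `κ⁺` into `𝒞`, and we pull the sequence back to `P i := γ⁻¹[C (γ i)]`. Since `γ` is normal,
a limit point `j < i` of `P i` is sent to a limit point `γ j` of `C (γ i)`, so coherence of `C`
gives `j ∈ P i` and `P j = P i ∩ j`; moreover `|P i| ≤ |C (γ i)|` and `otp (P i) ≤ otp (C (γ i))`.
If `cf i > ω`, the club `C (γ i)` contains unboundedly many limits of its own limit points; these
are limit points of `𝒞`, hence values of `γ`, so `P i` is unbounded in `i`. If `cf i = ω` and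
`P i` is bounded, adding an `ω`-sequence cofinal in `i` above `P i` creates no new limit points
below `i`, and the result has size `< κ`.
-/

open Cardinal Order Set

section LimitPoints

variable {s t : Set Ordinal} {a b : Ordinal}

theorem isLimitPt_iff : IsLimitPt s b ↔ 0 < b ∧ ∀ a < b, ∃ c ∈ s, a < c ∧ c < b := by
  refine ⟨fun ⟨hb, hsup⟩ => ⟨hb, fun a ha => ?_⟩, fun ⟨hb, h⟩ => ⟨hb, ?_⟩⟩
  · have hne : (s ∩ Iio b).Nonempty := by
      by_contra hemp
      rw [not_nonempty_iff_eq_empty.1 hemp, csSup_empty] at hsup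
      exact hb.ne' hsup
    obtain ⟨c, hc, hac⟩ := exists_lt_of_lt_csSup hne (hsup ▸ ha)
    exact ⟨c, hc.1, hac, hc.2⟩
  · refine le_antisymm (le_of_forall_lt fun a ha => ?_) (csSup_le' fun c hc => hc.2.le)
    obtain ⟨c, hc, hac, hcb⟩ := h a ha
    exact lt_csSup_of_lt ⟨b, fun c hc => hc.2.le⟩ ⟨hc, hcb⟩ hac

theorem IsLimitPt.isSuccLimit (h : IsLimitPt s b) : IsSuccLimit b := by
  obtain ⟨hb, h⟩ := isLimitPt_iff.1 h
  refine Ordinal.isSuccLimit_iff.2 ⟨hb.ne', isSuccPrelimit_of_succ_lt fun a ha => ?_⟩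
  obtain ⟨c, -, hac, hcb⟩ := h a ha
  exact (succ_le_of_lt hac).trans_lt hcb

theorem IsLimitPt.mono (h : IsLimitPt s b) (hst : s ⊆ t) : IsLimitPt t b := by
  obtain ⟨hb, h⟩ := isLimitPt_iff.1 h
  refine isLimitPt_iff.2 ⟨hb, fun a ha => ?_⟩
  obtain ⟨c, hc, hac, hcb⟩ := h a ha
  exact ⟨c, hst hc, hac, hcb⟩

theorem IsLimitPt.inter_Iio (h : IsLimitPt s b) : IsLimitPt (s ∩ Iio b) b := by
  rwa [IsLimitPt, inter_assoc, inter_self]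

theorem IsLimitPt.le_of_forall_le (h : IsLimitPt s b) (ha : ∀ c ∈ s, c ≤ a) : b ≤ a := by
  by_contra! hab
  obtain ⟨c, hc, hac, -⟩ := (isLimitPt_iff.1 h).2 a hab
  exact (ha c hc).not_gt hac

theorem IsLimitPt.union (h : IsLimitPt (s ∪ t) b) : IsLimitPt s b ∨ IsLimitPt t b := by
  obtain ⟨hb, h⟩ := isLimitPt_iff.1 h
  simp only [isLimitPt_iff, hb, true_and]
  by_contra! hst
  obtain ⟨⟨a, ha, has⟩, ⟨a', ha', hat⟩⟩ := hst
  obtain ⟨c, hc | hc, hac, hcb⟩ := h (max a a') (max_lt ha ha')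
  · exact (has c hc ((le_max_left _ _).trans_lt hac)).not_gt hcb
  · exact (hat c hc ((le_max_right _ _).trans_lt hac)).not_gt hcb

theorem IsLimitPt.apply_lt_of_range {g : ℕ → Ordinal} (hg : StrictMono g)
    (h : IsLimitPt (range g) b) (n : ℕ) : g n < b := by
  obtain ⟨hb, h⟩ := isLimitPt_iff.1 h
  induction n with
  | zero =>
    obtain ⟨_, ⟨k, rfl⟩, -, hk⟩ := h 0 hb
    exact (hg.monotone k.zero_le).trans_lt hk
  | succ n ih =>
    obtain ⟨_, ⟨k, rfl⟩, hnk, hk⟩ := h _ ih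
    exact (hg.monotone (hg.lt_iff_lt.1 hnk)).trans_lt hk

theorem Order.IsNormal.isLimitPt_image {f : Ordinal → Ordinal} (hf : IsNormal f)
    (h : IsLimitPt s b) : IsLimitPt (f '' s) (f b) := by
  obtain ⟨hb, hs⟩ := isLimitPt_iff.1 h
  refine isLimitPt_iff.2 ⟨pos_of_gt (hf.strictMono hb), fun a ha => ?_⟩
  obtain ⟨c, hcb, hac⟩ := (hf.lt_iff_exists_lt h.isSuccLimit).1 ha
  obtain ⟨p, hp, hcp, hpb⟩ := hs c hcb
  exact ⟨f p, mem_image_of_mem f hp, hac.trans (hf.strictMono hcp), hf.strictMono hpb⟩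

theorem dirSupClosed_setOf_isLimitPt (s : Set Ordinal) : DirSupClosed {b | IsLimitPt s b} := by
  rw [dirSupClosed_iff_of_linearOrder]
  rintro d hd ⟨c, hc⟩ b hb
  refine isLimitPt_iff.2 ⟨(isLimitPt_iff.1 (hd hc)).1.trans_le (hb.1 hc), fun a ha => ?_⟩
  obtain ⟨e, he, hae, heb⟩ := hb.exists_between ha
  obtain ⟨p, hp, hap, hpe⟩ := (isLimitPt_iff.1 (hd he)).2 a hae
  exact ⟨p, hp, hap, hpe.trans_le heb⟩

theorem exists_isLimitPt_of_aleph0_lt_cof (hsa : ∀ c ∈ s, c < a) (hs : ∀ b < a, ∃ c ∈ s, b < c)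
    (ha : ℵ₀ < a.cof) (hb : b < a) : ∃ c, b < c ∧ c < a ∧ IsLimitPt s c := by
  choose! f hfs hf using hs
  have hc : Ordinal.nfp f b < a := Ordinal.nfp_lt_ord ha (fun x hx => hsa _ (hfs x hx)) hb
  have hiter (n : ℕ) : f^[n] b < a := (Ordinal.iterate_le_nfp f b n).trans_lt hc
  have hstep (n : ℕ) : f^[n] b < f^[n + 1] b ∧ f^[n + 1] b ∈ s := by
    rw [Function.iterate_succ_apply']
    exact ⟨hf _ (hiter n), hfs _ (hiter n)⟩
  have hbc : b < Ordinal.nfp f b := (hstep 0).1.trans_le (Ordinal.iterate_le_nfp f b 1)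
  refine ⟨_, hbc, hc, isLimitPt_iff.2 ⟨pos_of_gt hbc, fun x hx => ?_⟩⟩
  obtain ⟨n, hn⟩ := Ordinal.lt_nfp_iff.1 hx
  exact ⟨_, (hstep n).2, hn.trans (hstep n).1,
    (hstep (n + 1)).1.trans_le (Ordinal.iterate_le_nfp f b _)⟩

end LimitPoints

section Clubs

variable {s t : Set Ordinal} {a b : Ordinal}

theorem IsClubIn.mem_of_isLimitPt (hs : IsClubIn s a) (hb : IsLimitPt s b) (hba : b < a) :
    b ∈ s :=
  hs.2.2 b hba hb.1 hb.2

theorem IsClubIn.exists_mem_isLimitPt (hs : IsClubIn s a) (hst : ∀ c, IsLimitPt s c → c ∈ t)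
    (ha : ℵ₀ < a.cof) (hb : b < a) : ∃ c ∈ s, b < c ∧ c < a ∧ IsLimitPt t c := by
  have hL (b) (hb : b < a) : ∃ c ∈ {c | c < a ∧ IsLimitPt s c}, b < c :=
    let ⟨c, hbc, hca, hc⟩ := exists_isLimitPt_of_aleph0_lt_cof hs.1 hs.2.1 ha hb
    ⟨c, ⟨hca, hc⟩, hbc⟩
  obtain ⟨c, hbc, hca, hc⟩ := exists_isLimitPt_of_aleph0_lt_cof (fun c hc => hc.1) hL ha hb
  exact ⟨c, hs.mem_of_isLimitPt (hc.mono fun x hx => hs.mem_of_isLimitPt hx.2 hx.1) hca,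
    hbc, hca, hc.mono fun x hx => hst x hx.2⟩

theorem exists_strictMono_nat_cofinal {i : Ordinal} (hi : IsSuccLimit i) (hcof : i.cof ≤ ℵ₀) :
    ∃ g : ℕ → Ordinal, StrictMono g ∧ (∀ n, g n < i) ∧ ∀ b < i, ∃ n, b ≤ g n := by
  have hω : i.cof.ord = Ordinal.omega0 := by
    rw [le_antisymm hcof (Ordinal.aleph0_le_cof_iff.2 (Ordinal.one_lt_cof_iff.2 hi)), ord_aleph0]
  obtain ⟨f, hf⟩ := Ordinal.exists_isFundamentalSeq hω
  refine ⟨fun n => f ⟨n, Ordinal.natCast_lt_omega0 n⟩,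
    fun m n hmn => hf.strictMono (Subtype.mk_lt_mk.2 (Nat.cast_lt.2 hmn)), fun n => (f _).2,
    fun b hb => ?_⟩
  obtain ⟨_, ⟨⟨m, hm⟩, rfl⟩, hbm⟩ := hf.isCofinal_range ⟨b, hb⟩
  obtain ⟨n, rfl⟩ := Ordinal.lt_omega0.1 hm
  exact ⟨n, hbm⟩

theorem IsLimitPt.of_union_cofinal_range {P : Set Ordinal} {g : ℕ → Ordinal} {i j : Ordinal}
    (hg : StrictMono g) (hgi : ∀ b < i, ∃ n, b ≤ g n) (hPa : ∀ p ∈ P, p ≤ a) (hji : j < i)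
    (hj : IsLimitPt (P ∪ range g ∩ Ioi a) j) :
    IsLimitPt P j ∧ (P ∪ range g ∩ Ioi a) ∩ Iio j = P ∩ Iio j := by
  obtain hP | hT := hj.union
  · refine ⟨hP, ?_⟩
    rw [union_inter_distrib_right, union_eq_left]
    rintro x ⟨⟨-, hax⟩, hxj⟩
    exact absurd (hax.trans hxj) (hP.le_of_forall_le hPa).not_gt
  · obtain ⟨n, hn⟩ := hgi j hji
    exact absurd ((hT.mono inter_subset_left).apply_lt_of_range hg n) hn.not_gt

theorem exists_isClubIn_extending {P : Set Ordinal} {i : Ordinal} (hi : IsSuccLimit i)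
    (hPi : ∀ p ∈ P, p < i) (hPcl : ∀ j < i, IsLimitPt P j → j ∈ P)
    (hcof : ¬ IsLimitPt P i → i.cof ≤ ℵ₀) :
    ∃ X, IsClubIn X i ∧ (IsLimitPt P i → X = P) ∧ #X ≤ #P + ℵ₀ ∧
      ∀ j < i, IsLimitPt X j → IsLimitPt P j ∧ X ∩ Iio j = P ∩ Iio j := by
  by_cases hP : IsLimitPt P i
  · refine ⟨P, ⟨hPi, fun b hb => ?_, fun b hbi hb0 hb => hPcl b hbi ⟨hb0, hb⟩⟩, fun _ => rfl,
      le_self_add, fun j _ hj => ⟨hj, rfl⟩⟩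
    obtain ⟨c, hc, hbc, -⟩ := (isLimitPt_iff.1 hP).2 b hb
    exact ⟨c, hc, hbc⟩
  obtain ⟨a, hai, hPa⟩ : ∃ a < i, ∀ p ∈ P, p ≤ a := by
    by_contra! h
    exact hP (isLimitPt_iff.2 ⟨hi.pos, fun a ha =>
      let ⟨p, hp, hap⟩ := h a ha; ⟨p, hp, hap, hPi p hp⟩⟩)
  obtain ⟨g, hg, hgi, hcofinal⟩ := exists_strictMono_nat_cofinal hi (hcof hP)
  have hX (j) (hji : j < i) := IsLimitPt.of_union_cofinal_range hg hcofinal hPa hji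
  refine ⟨P ∪ range g ∩ Ioi a, ⟨?_, fun b hb => ?_, fun j hji hj0 hj => ?_⟩, fun h => absurd h hP,
    ?_, hX⟩
  · rintro x (hx | ⟨⟨n, rfl⟩, -⟩)
    exacts [hPi x hx, hgi n]
  · obtain ⟨n, hn⟩ := hcofinal _ (hi.succ_lt (max_lt hb hai))
    have hlt := (lt_succ _).trans_le hn
    exact ⟨g n, Or.inr ⟨⟨n, rfl⟩, (le_max_right _ _).trans_lt hlt⟩,
      (le_max_left _ _).trans_lt hlt⟩
  · exact Or.inl (hPcl j hji (hX j hji ⟨hj0, hj⟩).1)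
  · calc #(P ∪ range g ∩ Ioi a : Set Ordinal) ≤ #P + #(range g ∩ Ioi a : Set Ordinal) :=
          mk_union_le _ _
      _ ≤ #P + ℵ₀ := by gcongr; exact ((countable_range g).mono inter_subset_left).le_aleph0

end Clubs

theorem enum_lt_ord_of_isRegular {c : Cardinal} (hc : c.IsRegular) {s : Set Ordinal}
    (hs : IsCofinal s) (hsc : ∀ a < c.ord, ∃ b ∈ s, a < b ∧ b < c.ord) {i : Ordinal}
    (hi : i < c.ord) : (enum s hs i : Ordinal) < c.ord := by
  induction i using WellFoundedLT.induction with | _ i IH => ?_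
  set f : Ordinal → Ordinal := fun j => enum s hs j
  have hf (j) (hj : j < i) : f j < c.ord := IH j hj (hj.trans hi)
  have hsup : sSup (f '' Iio i) < c.ord := by
    refine Ordinal.sSup_lt_of_lt_cof ?_ (forall_mem_image.2 hf)
    calc #(f '' Iio i) ≤ #(Iio i) := mk_image_le
      _ = lift i.card := mk_Iio_ordinal i
      _ < lift c := lift_lt.2 (lt_ord.1 hi)
      _ = (Ordinal.lift c.ord).cof := by rw [← Ordinal.lift_cof, hc.cof_ord]
  have hbdd : BddAbove (f '' Iio i) := ⟨c.ord, forall_mem_image.2 fun j hj => (hf j hj).le⟩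
  obtain ⟨b, hb, hsupb, hbc⟩ := hsc _ hsup
  refine (enum_le_of_forall_lt hb fun j hj => ?_).trans_lt hbc
  exact (le_csSup hbdd (mem_image_of_mem f hj)).trans_lt hsupb

theorem exists_isNormal_enum_isLimitPt {c : Cardinal} (hc : c.IsRegular) (hc₀ : ℵ₀ < c)
    {𝒞 : Set Ordinal} (h𝒞 : IsClubIn 𝒞 c.ord) :
    ∃ γ : Ordinal → Ordinal, IsNormal γ ∧ (∀ i < c.ord, γ i < c.ord ∧ γ i ∈ 𝒞) ∧
      ∀ d, IsLimitPt 𝒞 d → ∃ e, γ e = d := by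
  -- padding with `Ici c.ord` makes `D` cofinal, so that `enum D` is defined on all ordinals
  set D := {d | IsLimitPt 𝒞 d} ∪ Ici c.ord
  have hD : IsCofinal D := fun a => ⟨max a c.ord, Or.inr (le_max_right a _), le_max_left _ _⟩
  have hDc (a) (ha : a < c.ord) : ∃ b ∈ D, a < b ∧ b < c.ord :=
    let ⟨b, hab, hbc, hb⟩ :=
      exists_isLimitPt_of_aleph0_lt_cof h𝒞.1 h𝒞.2.1 (by rwa [hc.cof_ord]) ha
    ⟨b, Or.inl hb, hab, hbc⟩
  have hIci : DirSupClosed (Ici c.ord) := dirSupClosed_iff_of_linearOrder.2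
    fun d hd ⟨x, hx⟩ b hb => (hd hx).trans (hb.1 hx)
  refine ⟨Subtype.val ∘ enum D hD, isNormal_enum_iff_dirSupClosed.2
    ((dirSupClosed_setOf_isLimitPt 𝒞).union hIci), fun i hi => ?_,
    fun d hd => ⟨(enum D hD).symm ⟨d, Or.inl hd⟩, by simp⟩⟩
  have hlt := enum_lt_ord_of_isRegular hc hD hDc hi
  exact ⟨hlt, h𝒞.mem_of_isLimitPt ((enum D hD i).2.resolve_right hlt.not_ge) hlt⟩

section Pullback

universe u

variable {γ : Ordinal.{u} → Ordinal.{u}} {C : Ordinal → Set Ordinal} {D : Set Ordinal}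
  {i j : Ordinal}

theorem IsClubIn.preimage_coherent (hγ : IsNormal γ) (hC : IsClubIn (C (γ i)) (γ i))
    (hcoh : ∀ α, IsLimitPt (C (γ i)) α → C α = C (γ i) ∩ Iio α) (hji : j < i)
    (hj : IsLimitPt (γ ⁻¹' C (γ i)) j) :
    j ∈ γ ⁻¹' C (γ i) ∧ γ ⁻¹' C (γ j) = γ ⁻¹' C (γ i) ∩ Iio j := by
  have hγj : IsLimitPt (C (γ i)) (γ j) :=
    (hγ.isLimitPt_image hj).mono (image_preimage_subset γ _)
  refine ⟨hC.mem_of_isLimitPt hγj (hγ.strictMono hji), ?_⟩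
  ext x
  simp [hcoh _ hγj, hγ.strictMono.lt_iff_lt]

theorem IsClubIn.isLimitPt_preimage {𝒞 : Set Ordinal} (hγ : IsNormal γ)
    (hsurj : ∀ d, IsLimitPt 𝒞 d → ∃ e, γ e = d) (hD : IsClubIn D (γ i))
    (hD𝒞 : ∀ α, IsLimitPt D α → α ∈ 𝒞) (hcof : ℵ₀ < i.cof) : IsLimitPt (γ ⁻¹' D) i := by
  have hi : IsSuccLimit i := Ordinal.one_lt_cof_iff.1 (one_lt_aleph0.trans hcof)
  refine isLimitPt_iff.2 ⟨hi.pos, fun b hb => ?_⟩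
  obtain ⟨d, hdD, hbd, hdi, hd⟩ := hD.exists_mem_isLimitPt hD𝒞
    (by rwa [Ordinal.cof_map_of_isNormal hγ hi]) (hγ.strictMono hb)
  obtain ⟨e, rfl⟩ := hsurj d hd
  exact ⟨e, hdD, hγ.strictMono.lt_iff_lt.1 hbd, hγ.strictMono.lt_iff_lt.1 hdi⟩

end Pullback

theorem otp_le_otp_of_strictMonoOn {s t : Set Ordinal.{0}} {f : Ordinal → Ordinal}
    (hf : StrictMonoOn f s) (hst : MapsTo f s t) : otp s ≤ otp t :=
  (OrderEmbedding.ofStrictMono (fun x : s => (⟨f x, hst x.2⟩ : t))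
    fun x y hxy => hf x.2 y.2 hxy : s ↪o t).ltEmbedding.ordinal_type_le

theorem otp_lt_ord_of_mk_lt {s : Set Ordinal.{0}} {c : Cardinal.{1}} (h : #s < c) :
    otp s < c.ord := by
  rwa [otp, lt_ord, Ordinal.card_type]

theorem exists_coherent_isClubIn {ν : Ordinal} {P : Ordinal → Set Ordinal}
    (hPi : ∀ i < ν, ∀ p ∈ P i, p < i)
    (hPcoh : ∀ i < ν, ∀ j < i, IsLimitPt (P i) j → j ∈ P i ∧ P j = P i ∩ Iio j)
    (hcof : ∀ i < ν, ¬ IsLimitPt (P i) i → i.cof ≤ ℵ₀) :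
    ∃ E : Ordinal → Set Ordinal, ∀ i < ν, IsSuccLimit i →
      IsClubIn (E i) i ∧ (∀ j, IsLimitPt (E i) j → E j = E i ∩ Iio j) ∧
      (E i = P i ∨ i.cof ≤ ℵ₀ ∧ #(E i) ≤ #(P i) + ℵ₀) := by
  choose! E hE using fun i (hi : i < ν) (hlim : IsSuccLimit i) => exists_isClubIn_extending hlim
    (hPi i hi) (fun j hji hj => (hPcoh i hi j hji hj).1) (hcof i hi)
  refine ⟨E, fun i hi hlim => ?_⟩
  obtain ⟨hclub, hEP, hcard, hlimpt⟩ := hE i hi hlim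
  refine ⟨hclub, fun j hj => ?_, ?_⟩
  · obtain hji | rfl := (hj.le_of_forall_le fun c hc => (hclub.1 c hc).le).lt_or_eq
    · obtain ⟨hPj, hEj⟩ := hlimpt j hji hj
      have hPjj := (hPcoh i hi j hji hPj).2
      rw [(hE j (hji.trans hi) hj.isSuccLimit).2.1 (hPjj ▸ hPj.inter_Iio), hPjj, hEj]
    · exact (inter_eq_self_of_subset_left hclub.1).symm
  · by_cases hP : IsLimitPt (P i) i
    exacts [Or.inl (hEP hP), Or.inr ⟨hcof i hi hP, hcard⟩]

theorem square_like_to_square_general (κ : Cardinal.{0}) (hreg : κ.IsRegular)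
    (hunc : Cardinal.aleph0 < κ)
    (𝒞 : Set Ordinal) (C : Ordinal → Set Ordinal)
    (h𝒞club : IsClubIn 𝒞 (Order.succ κ).ord)
    (hclub : ∀ α ∈ 𝒞, IsClubIn (C α) α ∧ otp (C α) ≤ (Cardinal.lift.{1} κ).ord)
    (hcoh : ∀ β ∈ 𝒞, ∀ α, IsLimitPt (C β) α → α ∈ 𝒞 ∧ C α = C β ∩ Set.Iio α)
    (hnontriv : ∀ α ∈ 𝒞, α.cof < κ → Cardinal.mk (C α) < Cardinal.lift.{1} κ) :
    ∃ E : Ordinal → Set Ordinal,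
      ∀ i, i < (Order.succ κ).ord → Order.IsSuccLimit i →
        IsClubIn (E i) i ∧ otp (E i) ≤ (Cardinal.lift.{1} κ).ord ∧
        (∀ j, IsLimitPt (E i) j → E j = E i ∩ Set.Iio j) ∧
        (i.cof < κ → Cardinal.mk (E i) < Cardinal.lift.{1} κ) := by
  obtain ⟨γ, hγ, hγν, hγsurj⟩ := exists_isNormal_enum_isLimitPt
    (isRegular_succ hreg.aleph0_le) (hunc.trans (lt_succ κ)) h𝒞club
  have hCclub (i) (hi : i < (succ κ).ord) := hclub _ (hγν i hi).2
  have hCcoh (i) (hi : i < (succ κ).ord) := hcoh _ (hγν i hi).2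
  obtain ⟨E, hE⟩ := exists_coherent_isClubIn (P := fun i => γ ⁻¹' C (γ i))
    (fun i hi e he => hγ.strictMono.lt_iff_lt.1 ((hCclub i hi).1.1 _ he))
    (fun i hi j => (hCclub i hi).1.preimage_coherent hγ fun α hα => (hCcoh i hi α hα).2)
    (fun i hi hP => not_lt.1 fun h => hP ((hCclub i hi).1.isLimitPt_preimage hγ hγsurj
      (fun α hα => (hCcoh i hi α hα).1) h))
  refine ⟨E, fun i hi hlim => ?_⟩
  obtain ⟨hEclub, hEcoh, hEP⟩ := hE i hi hlim
  have hPcard (h : i.cof < κ) : #(γ ⁻¹' C (γ i)) < lift κ :=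
    (mk_preimage_of_injective γ _ hγ.strictMono.injective).trans_lt
      (hnontriv _ (hγν i hi).2 (by rwa [Ordinal.cof_map_of_isNormal hγ hlim]))
  rcases hEP with hEP | ⟨hcof, hEcard⟩
  · rw [hEP] at hEclub hEcoh ⊢
    exact ⟨hEclub, (otp_le_otp_of_strictMonoOn (hγ.strictMono.strictMonoOn _)
      (mapsTo_preimage _ _)).trans (hCclub i hi).2, hEcoh, hPcard⟩
  · have hsmall : #(E i) < lift κ := hEcard.trans_lt (add_lt_of_lt
      (aleph0_le_lift.2 hreg.aleph0_le) (hPcard (hcof.trans_lt hunc)) (by simpa using hunc))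
    exact ⟨hEclub, (otp_lt_ord_of_mk_lt hsmall).le, hEcoh, fun _ => hsmall⟩

/-- A square-like sequence indexed by a club `𝒞 ⊆ Lim(κ⁺)` can be extended
to a full square sequence on all of `Lim(κ⁺)`. -/
theorem square_like_to_square (κ : Cardinal.{0}) (hreg : κ.IsRegular)
    (hunc : Cardinal.aleph0 < κ)
    (𝒞 : Set Ordinal) (C : Ordinal → Set Ordinal)
    (h𝒞club : IsClubIn 𝒞 (Order.succ κ).ord)
    (h𝒞lim : ∀ α ∈ 𝒞, Order.IsSuccLimit α)
    (hclub : ∀ α ∈ 𝒞, IsClubIn (C α) α ∧ otp (C α) ≤ (Cardinal.lift.{1} κ).ord)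
    (hcoh : ∀ β ∈ 𝒞, ∀ α, IsLimitPt (C β) α → α ∈ 𝒞 ∧ C α = C β ∩ Set.Iio α)
    (hnontriv : ∀ α ∈ 𝒞, α.cof < κ → Cardinal.mk (C α) < Cardinal.lift.{1} κ) :
    ∃ E : Ordinal → Set Ordinal,
      ∀ i, i < (Order.succ κ).ord → Order.IsSuccLimit i →
        IsClubIn (E i) i ∧ otp (E i) ≤ (Cardinal.lift.{1} κ).ord ∧
        (∀ j, IsLimitPt (E i) j → E j = E i ∩ Set.Iio j) ∧
        (i.cof < κ → Cardinal.mk (E i) < Cardinal.lift.{1} κ) :=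
  square_like_to_square_general κ hreg hunc 𝒞 C h𝒞club hclub hcoh hnontriv
end
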